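/- arXiv:2412.00986 — 5 statements merged into one kernel-verified Lean document; each statement's English description precedes it below -/
import Mathlib

section
/- Let ν : [0,∞) → [0,∞) be a càdlàg nondecreasing function with ν(0) ≥ 0 and ∫_{[0,∞)} e^(-ρt) dν(t) < ∞ for some ρ > 0, and let Y(t) = e^(μt) with μ ≤ 0. Define ν̂(t) = ∫_{[0,t]} Y(s)^(-1) dν(s). Then ∫₀^∞ e^(-ρs) Y(s) ν̂(s) ds ≤ ρ^(-1) ν(0) + ρ^(-1) ∫_{[0,∞)} e^(-ρs) dν(s) < ∞, and consequently lim_{t→∞} e^(-ρt) Y(t) ν̂(t) = 0. -/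
/-!
Because `μ ≤ 0`, `e^{μt} ν̂(t) ≤ ν[0, t]`, so the integrand is dominated by
`h(t) = e^{-ρt} ν[0, t]`. Tonelli on the region `0 ≤ s ≤ t` gives
`∫₀^∞ h = ρ⁻¹ ∫_{[0,∞)} e^{-ρs} dν(s)`. Writing `h(t) = ∫_{[0,t]} e^{-ρt} dν(s)`,
dominated convergence with dominating function `e^{-ρs}` gives `h(t) → 0`.
-/

open Real MeasureTheory Set Filter Topology ENNReal

section ExpWeightedMass

variable {m : Measure ℝ} {ρ : ℝ}

theorem lintegral_Ici_exp_neg_mul (hρ : 0 < ρ) (s : ℝ) :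
    ∫⁻ t in Ici s, ENNReal.ofReal (exp (-ρ * t)) = ENNReal.ofReal (exp (-ρ * s) / ρ) := by
  rw [← Measure.restrict_congr_set Ioi_ae_eq_Ici,
    ← ofReal_integral_eq_lintegral_ofReal (exp_neg_integrableOn_Ioi s hρ)
      (ae_of_all _ fun _ => (exp_pos _).le),
    integral_exp_mul_Ioi (neg_lt_zero.2 hρ), neg_div_neg_eq]

theorem lintegral_Ici_exp_neg_mul_mul_measure_Icc [SFinite m] (hρ : 0 < ρ) :
    ∫⁻ t in Ici 0, ENNReal.ofReal (exp (-ρ * t)) * m (Icc 0 t) =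
      ∫⁻ s in Ici 0, ENNReal.ofReal (exp (-ρ * s) / ρ) ∂m := by
  set F : ℝ → ℝ → ℝ≥0∞ := fun t s =>
    {p : ℝ × ℝ | 0 ≤ p.2 ∧ p.2 ≤ p.1}.indicator (fun p => ENNReal.ofReal (exp (-ρ * p.1))) (t, s)
  have hF : Measurable (Function.uncurry F) :=
    (measurable_fst.const_mul _).exp.ennreal_ofReal.indicator
      ((measurableSet_le measurable_const measurable_snd).inter
        (measurableSet_le measurable_snd measurable_fst))
  have hF_left (t : ℝ) : ∫⁻ s, F t s ∂m = ENNReal.ofReal (exp (-ρ * t)) * m (Icc 0 t) := by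
    rw [← lintegral_indicator_const measurableSet_Icc]
    rfl
  have hF_right (s : ℝ) :
      ∫⁻ t, F t s = (Ici 0).indicator (fun s => ENNReal.ofReal (exp (-ρ * s) / ρ)) s := by
    by_cases hs : 0 ≤ s
    · rw [indicator_of_mem (mem_Ici.2 hs), ← lintegral_Ici_exp_neg_mul hρ,
        ← lintegral_indicator measurableSet_Ici]
      congr 1 with t
      simp [F, indicator_apply, hs]
    · rw [indicator_of_notMem (by simpa using hs)]
      simp [F, hs]
  calc ∫⁻ t in Ici 0, ENNReal.ofReal (exp (-ρ * t)) * m (Icc 0 t)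
      = ∫⁻ t, ∫⁻ s, F t s ∂m := by
        simp_rw [hF_left]
        exact setLIntegral_eq_of_support_subset <| Function.support_subset_iff'.2 fun t ht => by
          simp [Icc_eq_empty_of_lt (notMem_Ici.1 ht)]
    _ = ∫⁻ s, ∫⁻ t, F t s ∂volume ∂m := lintegral_lintegral_swap hF.aemeasurable
    _ = ∫⁻ s in Ici 0, ENNReal.ofReal (exp (-ρ * s) / ρ) ∂m := by
        simp_rw [hF_right, lintegral_indicator measurableSet_Ici]

theorem tendsto_exp_neg_mul_mul_measureReal_Icc (hρ : 0 < ρ)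
    (hint : IntegrableOn (fun s => exp (-ρ * s)) (Ici 0) m) :
    Tendsto (fun t => exp (-ρ * t) * m.real (Icc 0 t)) atTop (𝓝 0) := by
  have hexp : Tendsto (fun t => exp (-ρ * t)) atTop (𝓝 0) :=
    tendsto_exp_atBot.comp (tendsto_id.const_mul_atTop_of_neg (neg_lt_zero.2 hρ))
  have hrepr (t : ℝ) : exp (-ρ * t) * m.real (Icc 0 t) =
      ∫ s in Ici 0, (Iic t).indicator (fun _ => exp (-ρ * t)) s ∂m := by
    rw [setIntegral_indicator measurableSet_Iic, Ici_inter_Iic, setIntegral_const, smul_eq_mul,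
      mul_comm]
  have hbound (t s : ℝ) : ‖(Iic t).indicator (fun _ => exp (-ρ * t)) s‖ ≤ exp (-ρ * s) := by
    by_cases hst : s ≤ t
    · rw [indicator_of_mem (mem_Iic.2 hst), norm_of_nonneg (exp_pos _).le]
      exact exp_le_exp.2 (by nlinarith)
    · rw [indicator_of_notMem (mt mem_Iic.1 hst), norm_zero]
      exact (exp_pos _).le
  have hlim (s : ℝ) :
      Tendsto (fun t => (Iic t).indicator (fun _ => exp (-ρ * t)) s) atTop (𝓝 0) :=
    hexp.congr' <| (eventually_ge_atTop s).mono fun _ hst =>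
      (indicator_of_mem (mem_Iic.2 hst) _).symm
  simp_rw [hrepr]
  simpa using tendsto_integral_filter_of_dominated_convergence (fun s => exp (-ρ * s))
    (.of_forall fun _ =>
      (measurable_const.indicator measurableSet_Iic).aestronglyMeasurable)
    (.of_forall fun t => ae_of_all _ (hbound t)) hint (ae_of_all _ hlim)

end ExpWeightedMass

section LocallyFinite

variable {m : Measure ℝ} [IsLocallyFiniteMeasure m] {ρ : ℝ}

theorem monotone_measureReal_Icc (a : ℝ) : Monotone fun t => m.real (Icc a t) :=
  fun _ _ hst => measureReal_mono (Icc_subset_Icc_right hst) isCompact_Icc.measure_lt_top.ne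

theorem monotone_setIntegral_Icc_exp (c : ℝ) :
    Monotone fun t => ∫ s in Icc 0 t, exp (c * s) ∂m :=
  fun _ _ hst => setIntegral_mono_set
    (continuous_exp.comp (continuous_const.mul continuous_id)).integrableOn_Icc
    (ae_of_all _ fun _ => (exp_pos _).le) (Icc_subset_Icc_right hst).eventuallyLE

theorem lintegral_Ioi_ofReal_exp_neg_mul_mul_measureReal_Icc (hρ : 0 < ρ)
    (hint : IntegrableOn (fun s => exp (-ρ * s)) (Ici 0) m) :
    ∫⁻ t in Ioi 0, ENNReal.ofReal (exp (-ρ * t) * m.real (Icc 0 t)) =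
      ENNReal.ofReal (ρ⁻¹ * ∫ s in Ici 0, exp (-ρ * s) ∂m) := by
  simp_rw [ENNReal.ofReal_mul (exp_pos _).le, measureReal_def,
    ofReal_toReal isCompact_Icc.measure_lt_top.ne]
  rw [Measure.restrict_congr_set Ioi_ae_eq_Ici, lintegral_Ici_exp_neg_mul_mul_measure_Icc hρ,
    ← integral_const_mul, ofReal_integral_eq_lintegral_ofReal (hint.const_mul _)
      (ae_of_all _ fun _ => by positivity)]
  simp_rw [div_eq_inv_mul]

theorem integrableOn_exp_neg_mul_mul_measureReal_Icc (hρ : 0 < ρ)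
    (hint : IntegrableOn (fun s => exp (-ρ * s)) (Ici 0) m) :
    IntegrableOn (fun t => exp (-ρ * t) * m.real (Icc 0 t)) (Ioi 0) := by
  refine ⟨((measurable_id.const_mul _).exp.mul
    (monotone_measureReal_Icc 0).measurable).aestronglyMeasurable, ?_⟩
  rw [hasFiniteIntegral_iff_ofReal (ae_of_all _ fun _ => by positivity),
    lintegral_Ioi_ofReal_exp_neg_mul_mul_measureReal_Icc hρ hint]
  exact ofReal_lt_top

theorem integral_Ioi_exp_neg_mul_mul_measureReal_Icc (hρ : 0 < ρ)
    (hint : IntegrableOn (fun s => exp (-ρ * s)) (Ici 0) m) :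
    ∫ t in Ioi 0, exp (-ρ * t) * m.real (Icc 0 t) = ρ⁻¹ * ∫ s in Ici 0, exp (-ρ * s) ∂m := by
  rw [integral_eq_lintegral_of_nonneg_ae (ae_of_all _ fun _ => by positivity)
      (integrableOn_exp_neg_mul_mul_measureReal_Icc hρ hint).aestronglyMeasurable,
    lintegral_Ioi_ofReal_exp_neg_mul_mul_measureReal_Icc hρ hint,
    toReal_ofReal (mul_nonneg (inv_nonneg.2 hρ.le)
      (setIntegral_nonneg measurableSet_Ici fun _ _ => (exp_pos _).le))]

theorem exp_mul_setIntegral_Icc_exp_neg_mul_le {μ : ℝ} (hμ : μ ≤ 0) (t : ℝ) :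
    exp (μ * t) * ∫ s in Icc 0 t, exp (-μ * s) ∂m ≤ m.real (Icc 0 t) := by
  have hle : ∫ s in Icc 0 t, exp (-μ * s) ∂m ≤ ∫ s in Icc 0 t, exp (-μ * t) ∂m :=
    setIntegral_mono_on (continuous_exp.comp (continuous_const.mul continuous_id)).integrableOn_Icc
      (integrableOn_const isCompact_Icc.measure_lt_top.ne) measurableSet_Icc
      fun _ hs => exp_le_exp.2 (by nlinarith [hs.2])
  calc exp (μ * t) * ∫ s in Icc 0 t, exp (-μ * s) ∂m
      ≤ exp (μ * t) * (m.real (Icc 0 t) * exp (-μ * t)) := by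
        rw [← smul_eq_mul (a := m.real _), ← setIntegral_const]
        gcongr
    _ = m.real (Icc 0 t) := by
        rw [mul_left_comm, ← exp_add]
        simp

end LocallyFinite

/-- Discounted admissible controls: if ν is càdlàg nondecreasing (a Stieltjes function)
with ν(0) ≥ 0 and finite discounted total mass, and Y(t) = e^(μt) with μ ≤ 0,
ν̂(t) = ∫_{[0,t]} Y(s)⁻¹ dν(s), then ∫₀^∞ e^(-ρs) Y(s) ν̂(s) ds is finite, bounded by
ρ⁻¹ν(0) + ρ⁻¹∫ e^(-ρs) dν(s), and e^(-ρt) Y(t) ν̂(t) → 0. -/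
theorem stmt2 (ρ μ : ℝ) (hρ : 0 < ρ) (hμ : μ ≤ 0)
    (ν : StieltjesFunction ℝ) (hν0 : 0 ≤ ν 0)
    (hint : MeasureTheory.IntegrableOn (fun t : ℝ => Real.exp (-ρ * t)) (Set.Ici 0) ν.measure)
    (νhat : ℝ → ℝ)
    (hνhat : ∀ t : ℝ, νhat t = ∫ s in Set.Icc (0:ℝ) t, Real.exp (-μ * s) ∂ν.measure) :
    MeasureTheory.IntegrableOn
      (fun s : ℝ => Real.exp (-ρ * s) * Real.exp (μ * s) * νhat s) (Set.Ioi 0) ∧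
    (∫ s in Set.Ioi (0:ℝ), Real.exp (-ρ * s) * Real.exp (μ * s) * νhat s) ≤
      ρ⁻¹ * ν 0 + ρ⁻¹ * ∫ t in Set.Ici (0:ℝ), Real.exp (-ρ * t) ∂ν.measure ∧
    Filter.Tendsto (fun t : ℝ => Real.exp (-ρ * t) * Real.exp (μ * t) * νhat t)
      Filter.atTop (nhds 0) := by
  set m := ν.measure
  set g := fun s : ℝ => exp (-ρ * s) * exp (μ * s) * νhat s
  set h := fun t : ℝ => exp (-ρ * t) * m.real (Icc 0 t)
  have hνhat_mono : Monotone νhat := by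
    rw [funext hνhat]
    exact monotone_setIntegral_Icc_exp (-μ)
  have hg_nonneg (t : ℝ) : 0 ≤ g t := by
    have hνhat_nonneg : 0 ≤ νhat t :=
      hνhat t ▸ setIntegral_nonneg measurableSet_Icc fun _ _ => (exp_pos _).le
    positivity
  have hg_le_h (t : ℝ) : g t ≤ h t := by
    calc g t = exp (-ρ * t) * (exp (μ * t) * ∫ s in Icc 0 t, exp (-μ * s) ∂m) := by
          rw [← hνhat, ← mul_assoc]
      _ ≤ h t := mul_le_mul_of_nonneg_left (exp_mul_setIntegral_Icc_exp_neg_mul_le hμ t)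
          (exp_pos _).le
  have hh_int : IntegrableOn h (Ioi 0) := integrableOn_exp_neg_mul_mul_measureReal_Icc hρ hint
  have hg_int : IntegrableOn g (Ioi 0) :=
    hh_int.mono' (((measurable_id.const_mul _).exp.mul (measurable_id.const_mul _).exp).mul
      hνhat_mono.measurable).aestronglyMeasurable
      (ae_of_all _ fun t => (norm_of_nonneg (hg_nonneg t)).trans_le (hg_le_h t))
  refine ⟨hg_int, ?_,
    squeeze_zero hg_nonneg hg_le_h (tendsto_exp_neg_mul_mul_measureReal_Icc hρ hint)⟩
  calc ∫ t in Ioi 0, g t ≤ ∫ t in Ioi 0, h t := setIntegral_mono hg_int hh_int hg_le_h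
    _ = ρ⁻¹ * ∫ t in Ici 0, exp (-ρ * t) ∂m :=
        integral_Ioi_exp_neg_mul_mul_measureReal_Icc hρ hint
    _ ≤ _ := le_add_of_nonneg_left (mul_nonneg (inv_nonneg.2 hρ.le) hν0)
end

section
/- Let μ < 0, η_max > 0, and let a : [0,∞) → (0,∞) be continuously differentiable with ȧ > 0. If τ_M(r,x) is defined implicitly by x − f_M(τ_M) = e^(|μ|τ_M) a(r + η_max τ_M) for x > a(r), then τ_M is continuously differentiable with ∂τ_M/∂x = 1 / (|μ|x + η_max + η_max e^(|μ|τ_M) ȧ(r + η_max τ_M)) > 0. -/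
open Real Set Filter Topology

/-!
For fixed `r`, the defining equation says `g (τ_M(r,x)) = x` with
`g τ = f_M(τ) + e^{|μ|τ} a(r + η_max τ)`. Since `g` is strictly increasing on `[0, ∞)` with
`g 0 = a r`, the right inverse `τ_M(r,·)` is strictly monotone with image containing `(0, ∞)`,
hence continuous; the inverse function rule then gives `∂τ_M/∂x = 1 / g'(τ_M)`, and the
defining equation rewrites `g'(τ_M)` as the stated denominator.
-/

theorem StrictMonoOn.continuousAt_of_leftInvOn {α β : Type*} [LinearOrder α] [TopologicalSpace α]
    [OrderTopology α] [DenselyOrdered α] [LinearOrder β] [TopologicalSpace β] [OrderTopology β]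
    {g : α → β} {h : β → α} {s : Set α} {U : Set β} {x : β}
    (hg : StrictMonoOn g s) (hinv : LeftInvOn g h U) (hh : MapsTo h U s) (hgs : MapsTo g s U)
    (hU : U ∈ 𝓝 x) (hs : s ∈ 𝓝 (h x)) : ContinuousAt h x := by
  have h_mono : StrictMonoOn h U := fun y₁ hy₁ y₂ hy₂ hlt =>
    (hg.lt_iff_lt (hh hy₁) (hh hy₂)).mp (by rwa [hinv hy₁, hinv hy₂])
  have h_surj : s ⊆ h '' U := fun t ht =>
    ⟨g t, hgs ht, hg.injOn (hh (hgs ht)) ht (hinv (hgs ht))⟩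
  exact h_mono.continuousAt_of_image_mem_nhds hU (mem_of_superset hs h_surj)

/-- `implicitMap |μ| η_max a r τ = f_M(τ) + e^{|μ|τ} a(r + η_max τ)`. -/
noncomputable def implicitMap (k c : ℝ) (a : ℝ → ℝ) (r t : ℝ) : ℝ :=
  c / k * (exp (k * t) - 1) + exp (k * t) * a (r + c * t)

theorem implicitMap_zero (k c : ℝ) (a : ℝ → ℝ) (r : ℝ) : implicitMap k c a r 0 = a r := by
  simp [implicitMap]

theorem hasDerivAt_implicitMap {k c : ℝ} {a : ℝ → ℝ} {r t : ℝ} (hk : k ≠ 0)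
    (ha : DifferentiableAt ℝ a (r + c * t)) :
    HasDerivAt (implicitMap k c a r)
      (c * exp (k * t) + k * exp (k * t) * a (r + c * t) +
        c * exp (k * t) * deriv a (r + c * t)) t := by
  have hexp : HasDerivAt (fun t => exp (k * t)) (exp (k * t) * k) t :=
    ((hasDerivAt_id t).const_mul k).exp.congr_deriv (by simp)
  have hshift : HasDerivAt (fun t => r + c * t) c t :=
    ((hasDerivAt_id t).const_mul c).const_add r |>.congr_deriv (by simp)
  have := ((hexp.sub_const 1).const_mul (c / k)).add (hexp.mul (ha.hasDerivAt.comp t hshift))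
  exact this.congr_deriv (by simp only [Function.comp_apply]; field_simp; ring)

theorem hasDerivAt_implicitMap_of_eq {k c : ℝ} {a : ℝ → ℝ} {r t x : ℝ} (hk : k ≠ 0)
    (ha : DifferentiableAt ℝ a (r + c * t)) (hx : implicitMap k c a r t = x) :
    HasDerivAt (implicitMap k c a r)
      (k * x + c + c * exp (k * t) * deriv a (r + c * t)) t := by
  convert hasDerivAt_implicitMap hk ha using 1
  rw [← hx, implicitMap]
  field_simp
  ring

theorem strictMonoOn_implicitMap {k c : ℝ} {a : ℝ → ℝ} {r : ℝ} (hk : 0 < k) (hc : 0 < c)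
    (hr : 0 ≤ r) (ha : Differentiable ℝ a) (ha_pos : ∀ s > (0:ℝ), 0 < a s)
    (ha' : ∀ s > (0:ℝ), 0 < deriv a s) :
    StrictMonoOn (implicitMap k c a r) (Ici 0) := by
  refine strictMonoOn_of_deriv_pos (convex_Ici 0)
    (fun t _ => (hasDerivAt_implicitMap hk.ne' (ha _)).continuousAt.continuousWithinAt)
    fun t ht => ?_
  rw [interior_Ici, mem_Ioi] at ht
  have hs : 0 < r + c * t := by positivity
  rw [(hasDerivAt_implicitMap hk.ne' (ha _)).deriv]
  have := ha_pos _ hs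
  have := ha' _ hs
  positivity

/-- Implicit differentiation of τ_M: if x − f_M(τ_M(r,x)) = e^(|μ|τ_M) a(r + η_max τ_M)
for x > a(r), then ∂τ_M/∂x = 1/(|μ|x + η_max + η_max e^(|μ|τ_M) ȧ(r + η_max τ_M)) > 0. -/
theorem stmt7 (μ ηmax : ℝ) (hμ : μ < 0) (hη : 0 < ηmax)
    (a : ℝ → ℝ) (ha : ContDiff ℝ 1 a)
    (ha_pos : ∀ s > (0:ℝ), 0 < a s) (ha' : ∀ s > (0:ℝ), 0 < deriv a s)
    (fM : ℝ → ℝ)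
    (hf : ∀ t : ℝ, fM t = (ηmax / |μ|) * (Real.exp (|μ| * t) - 1))
    (τM : ℝ → ℝ → ℝ)
    (hτ_pos : ∀ r > (0:ℝ), ∀ x, a r < x → 0 < τM r x)
    (hτ : ∀ r > (0:ℝ), ∀ x, a r < x →
      x - fM (τM r x) = Real.exp (|μ| * τM r x) * a (r + ηmax * τM r x)) :
    ∀ r > (0:ℝ), ∀ x, a r < x →
      HasDerivAt (fun y => τM r y)
        (1 / (|μ| * x + ηmax +
          ηmax * Real.exp (|μ| * τM r x) * deriv a (r + ηmax * τM r x))) x ∧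
      0 < 1 / (|μ| * x + ηmax +
          ηmax * Real.exp (|μ| * τM r x) * deriv a (r + ηmax * τM r x)) := by
  intro r hr x hx
  have hk : 0 < |μ| := abs_pos.mpr hμ.ne
  have hda : Differentiable ℝ a := ha.differentiable one_ne_zero
  set g := implicitMap |μ| ηmax a r
  have hinv : LeftInvOn g (τM r) (Ioi (a r)) := fun y hy => by
    have := hτ r hr y hy
    rw [hf] at this
    simp only [g, implicitMap]
    linarith
  have hmono : StrictMonoOn g (Ioi 0) :=
    (strictMonoOn_implicitMap hk hη hr.le hda ha_pos ha').mono Ioi_subset_Ici_self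
  have hgs : MapsTo g (Ioi 0) (Ioi (a r)) := fun t ht => by
    simpa [g, implicitMap_zero] using
      strictMonoOn_implicitMap hk hη hr.le hda ha_pos ha' self_mem_Ici (Ioi_subset_Ici_self ht) ht
  have hcont : ContinuousAt (τM r) x :=
    hmono.continuousAt_of_leftInvOn hinv (fun y hy => hτ_pos r hr y hy) hgs
      (Ioi_mem_nhds hx) (Ioi_mem_nhds (hτ_pos r hr x hx))
  have hD : 0 < |μ| * x + ηmax +
      ηmax * Real.exp (|μ| * τM r x) * deriv a (r + ηmax * τM r x) := by
    have := ha' _ (by have := hτ_pos r hr x hx; positivity : 0 < r + ηmax * τM r x)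
    have := (ha_pos r hr).trans hx
    positivity
  refine ⟨?_, by positivity⟩
  rw [one_div]
  exact HasDerivAt.of_local_left_inverse hcont
    (hasDerivAt_implicitMap_of_eq hk.ne' (hda _) (hinv hx)) hD.ne'
    (eventually_of_mem (Ioi_mem_nhds hx) hinv)
end

section
/- In the μ = 0 deterministic setting, the function w₁ satisfies the first-order PDE η_max(∂_r w₁(r,x) − ∂_x w₁(r,x)) = ρ̄ w₁(r,x) − π(x) for all (r,x) with a(r) < x. -/
/-!
Both pieces of `w₁` are discounted integrals `∫ e^{-ρ̄t} φ(t) dt` along the characteristic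
`t ↦ (r + η_max t, x - η_max t)`, and the identity is integration by parts
`∫ e^{-ρ̄t} φ' = [e^{-ρ̄t} φ] + ρ̄ ∫ e^{-ρ̄t} φ` on `[0, τ_M]` and on `(τ_M, ∞)`.
The boundary terms at `τ_M` cancel because `x - η_max τ_M = a(r + η_max τ_M)`, the one at `0`
is `π(x)`, and the one at `∞` vanishes because `e^{-ρ̄t} π(a(r + η_max t))` is integrable and
`π ∘ a` is monotone. On `(τ_M, ∞)` the integrand `e^{-ρ̄t} φ'` is nonnegative, which is what
makes it integrable.
-/

open Real Set MeasureTheory Filter Topology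

lemma hasDerivAt_exp_neg_mul_mul {ρ t φ' : ℝ} {φ : ℝ → ℝ} (hφ : HasDerivAt φ φ' t) :
    HasDerivAt (fun s => exp (-ρ * s) * φ s)
      (exp (-ρ * t) * φ' - ρ * (exp (-ρ * t) * φ t)) t := by
  have hexp : HasDerivAt (fun s => exp (-ρ * s)) (exp (-ρ * t) * -ρ) t := by
    simpa only [id, mul_one] using ((hasDerivAt_id t).const_mul (-ρ)).exp
  exact (hexp.mul hφ).congr_deriv (by ring)

lemma integrableOn_exp_neg_mul_mul_comp_add_const {ρ a c : ℝ} {h : ℝ → ℝ}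
    (hint : IntegrableOn (fun t => exp (-ρ * t) * h t) (Ioi a)) :
    IntegrableOn (fun t => exp (-ρ * t) * h (t + c)) (Ioi (a - c)) := by
  have hshift : IntegrableOn (fun t => exp (-ρ * (t + c)) * h (t + c)) (Ioi (a - c)) := by
    rw [← preimage_add_const_Ioi]
    exact ((measurePreserving_add_right volume c).integrableOn_comp_preimage
      (measurableEmbedding_addRight c)).2 hint
  refine IntegrableOn.congr_fun (hshift.const_mul (exp (ρ * c))) (fun t _ => ?_) measurableSet_Ioi
  rw [← mul_assoc, ← exp_add]
  ring_nf

lemma integrableOn_exp_neg_mul_mul_comp_const_add {ρ η r : ℝ} {h : ℝ → ℝ} (hη : 0 < η)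
    (hr : 0 ≤ r) (hint : IntegrableOn (fun t => exp (-ρ * t) * h (η * t)) (Ioi 0)) :
    IntegrableOn (fun t => exp (-ρ * t) * h (r + η * t)) (Ioi 0) := by
  refine ((integrableOn_exp_neg_mul_mul_comp_add_const (c := r / η) hint).mono_set
    (Ioi_subset_Ioi (by linarith [div_nonneg hr hη.le]))).congr_fun (fun t _ => ?_)
    measurableSet_Ioi
  simp only [mul_add, mul_div_cancel₀ r hη.ne', add_comm]

lemma tendsto_exp_neg_mul_mul_of_monotone {ρ τ : ℝ} {φ : ℝ → ℝ} (hρ : 0 < ρ)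
    (hφ : Monotone φ) (hint : IntegrableOn (fun t => exp (-ρ * t) * φ t) (Ioi τ)) :
    Tendsto (fun t => exp (-ρ * t) * φ t) atTop (𝓝 0) := by
  set g := fun t => exp (-ρ * t) * φ t
  have hexp : Tendsto (fun t => exp (-ρ * t)) atTop (𝓝 0) :=
    tendsto_exp_atBot.comp (tendsto_id.const_mul_atTop_of_neg (neg_neg_of_pos hρ))
  have hgi : ∀ b c, τ ≤ b → b ≤ c → IntervalIntegrable g volume b c := fun b c hb hbc =>
    (intervalIntegrable_iff_integrableOn_Ioc_of_le hbc).2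
      (hint.mono_set (Ioc_subset_Ioi_self.trans (Ioi_subset_Ioi hb)))
  have hwindow : Tendsto (fun T => ∫ s in T..T + 1, g s) atTop (𝓝 0) := by
    have h := (intervalIntegral_tendsto_integral_Ioi τ hint
      (tendsto_atTop_add_const_right _ 1 tendsto_id)).sub
      (intervalIntegral_tendsto_integral_Ioi τ hint tendsto_id)
    rw [sub_self] at h
    refine h.congr' ?_
    filter_upwards [eventually_ge_atTop τ] with T hT
    simp only [id]
    exact intervalIntegral.integral_interval_sub_left (hgi τ _ le_rfl (by linarith))
      (hgi τ T le_rfl hT)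
  have hupper : Tendsto (fun T => max 0 (exp ρ * ∫ s in T..T + 1, g s)) atTop (𝓝 0) := by
    simpa using (tendsto_const_nhds (x := (0 : ℝ))).max (hwindow.const_mul (exp ρ))
  have hlower : Tendsto (fun T => exp (-ρ * T) * φ 0) atTop (𝓝 0) := by
    simpa only [zero_mul] using hexp.mul_const (φ 0)
  refine tendsto_of_tendsto_of_tendsto_of_le_of_le' hlower hupper ?_ ?_
  · filter_upwards [eventually_ge_atTop 0] with T hT
    exact mul_le_mul_of_nonneg_left (hφ hT) (exp_pos _).le
  -- once `φ T ≥ 0`, monotonicity gives `g T ≤ e^ρ ∫_T^{T+1} g`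
  · filter_upwards [eventually_ge_atTop τ] with T hT
    rcases le_or_gt (φ T) 0 with hneg | hpos
    · exact le_max_of_le_left (mul_nonpos_of_nonneg_of_nonpos (exp_pos _).le hneg)
    refine le_max_of_le_right ?_
    have hwin : ∀ s ∈ Icc T (T + 1), exp (-ρ * (T + 1)) * φ T ≤ g s := fun s hs =>
      mul_le_mul (exp_le_exp.2 (by nlinarith [hs.2])) (hφ hs.1) hpos.le (exp_pos _).le
    calc g T = exp ρ * ∫ _ in T..T + 1, exp (-ρ * (T + 1)) * φ T := by
          simp only [g, intervalIntegral.integral_const, add_sub_cancel_left, one_smul]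
          rw [← mul_assoc, ← exp_add]
          ring_nf
      _ ≤ exp ρ * ∫ s in T..T + 1, g s := by
          gcongr
          exact intervalIntegral.integral_mono_on (by linarith) intervalIntegrable_const
            (hgi T _ hT (by linarith)) hwin

lemma integral_exp_neg_mul_mul_deriv {ρ a b : ℝ} {φ φ' : ℝ → ℝ}
    (hφ : ∀ t, HasDerivAt φ (φ' t) t) (hφ' : Continuous φ') :
    ∫ t in a..b, exp (-ρ * t) * φ' t =
      exp (-ρ * b) * φ b - exp (-ρ * a) * φ a + ρ * ∫ t in a..b, exp (-ρ * t) * φ t := by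
  have hcont : Continuous fun t => exp (-ρ * t) * φ t := by
    have : Continuous φ := continuous_iff_continuousAt.2 fun t => (hφ t).continuousAt
    fun_prop
  have hcont' : Continuous fun t => exp (-ρ * t) * φ' t := by fun_prop
  have hFTC := intervalIntegral.integral_eq_sub_of_hasDerivAt
    (fun t _ => hasDerivAt_exp_neg_mul_mul (ρ := ρ) (hφ t))
    ((hcont'.sub (hcont.const_mul ρ)).intervalIntegrable a b)
  rw [intervalIntegral.integral_sub (hcont'.intervalIntegrable a b)
    ((hcont.const_mul ρ).intervalIntegrable a b), intervalIntegral.integral_const_mul] at hFTC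
  linear_combination hFTC

lemma integral_Ioi_exp_neg_mul_mul_deriv {ρ τ : ℝ} {φ φ' : ℝ → ℝ}
    (hφ : ∀ t, HasDerivAt φ (φ' t) t) (hφ' : ∀ t ∈ Ioi τ, 0 ≤ φ' t)
    (hint : IntegrableOn (fun t => exp (-ρ * t) * φ t) (Ioi τ))
    (hlim : Tendsto (fun t => exp (-ρ * t) * φ t) atTop (𝓝 0)) :
    ∫ t in Ioi τ, exp (-ρ * t) * φ' t =
      ρ * (∫ t in Ioi τ, exp (-ρ * t) * φ t) - exp (-ρ * τ) * φ τ := by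
  set g := fun t => exp (-ρ * t) * φ t
  have hcont : Continuous g := by
    simp only [g]
    have : Continuous φ := continuous_iff_continuousAt.2 fun t => (hφ t).continuousAt
    fun_prop
  have hderiv : ∀ t ∈ Ici τ, HasDerivAt (fun t => g t + ρ * ∫ s in τ..t, g s)
      (exp (-ρ * t) * φ' t) t := fun t _ =>
    ((hasDerivAt_exp_neg_mul_mul (hφ t)).add
      ((hcont.integral_hasStrictDerivAt τ t).hasDerivAt.const_mul ρ)).congr_deriv (by ring)
  have hlim' := hlim.add ((intervalIntegral_tendsto_integral_Ioi τ hint tendsto_id).const_mul ρ)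
  rw [integral_Ioi_of_hasDerivAt_of_nonneg' hderiv
    (fun t ht => mul_nonneg (exp_pos _).le (hφ' t ht)) hlim']
  simp [g]

lemma deriv_nonneg_of_monotoneOn_Ici {f : ℝ → ℝ} {c z : ℝ} (hf : MonotoneOn f (Ici c))
    (hz : c < z) : 0 ≤ deriv f z :=
  hf.derivWithin_nonneg.trans_eq (derivWithin_of_mem_nhds (Ici_mem_nhds hz))

theorem stmt11_general (ρb ηmax : ℝ) (hρ : 0 < ρb) (hη : 0 < ηmax)
    (pf a : ℝ → ℝ)
    (hpf : ContDiff ℝ 1 pf) (hpf_mono : StrictMonoOn pf (Set.Ici 0))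
    (ha : ContDiff ℝ 1 a) (ha_mono : StrictMono a) (ha_pos : ∀ s, 0 < a s)
    (hint : MeasureTheory.IntegrableOn
      (fun t : ℝ => Real.exp (-ρb * t) * pf (a (ηmax * t))) (Set.Ioi 0))
    (τM : ℝ → ℝ → ℝ)
    (hτ : ∀ r ≥ (0:ℝ), ∀ x, a r < x →
      x - ηmax * τM r x = a (r + ηmax * τM r x) ∧ 0 < τM r x)
    (w1 : ℝ → ℝ → ℝ)
    (hw1 : ∀ r x : ℝ, w1 r x =
      (∫ t in Set.Ioc (0:ℝ) (τM r x), Real.exp (-ρb * t) * pf (x - ηmax * t)) +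
      ∫ t in Set.Ioi (τM r x), Real.exp (-ρb * t) * pf (a (r + ηmax * t))) :
    ∀ r ≥ (0:ℝ), ∀ x, a r < x →
      ηmax * ((∫ t in Set.Ioi (τM r x),
          Real.exp (-ρb * t) * deriv pf (a (r + ηmax * t)) * deriv a (r + ηmax * t)) -
        ∫ t in Set.Ioc (0:ℝ) (τM r x), Real.exp (-ρb * t) * deriv pf (x - ηmax * t)) =
      ρb * w1 r x - pf x := by
  intro r hr x hx
  rw [hw1]
  obtain ⟨hmeet, hτpos⟩ := hτ r hr x hx
  set τ := τM r x
  have hpfd (z : ℝ) : HasDerivAt pf (deriv pf z) z :=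
    (hpf.differentiable one_ne_zero z).hasDerivAt
  have had (z : ℝ) : HasDerivAt a (deriv a z) z := (ha.differentiable one_ne_zero z).hasDerivAt
  have hpf' : Continuous (deriv pf) := hpf.continuous_deriv le_rfl
  have hdown (t : ℝ) : HasDerivAt (fun t => x - ηmax * t) (-ηmax) t := by
    simpa using ((hasDerivAt_id t).const_mul ηmax).const_sub x
  have hup (t : ℝ) : HasDerivAt (fun t => r + ηmax * t) ηmax t := by
    simpa using ((hasDerivAt_id t).const_mul ηmax).const_add r
  have hbefore := integral_exp_neg_mul_mul_deriv (ρ := ρb) (a := 0) (b := τ)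
    (φ := fun t => pf (x - ηmax * t)) (φ' := fun t => deriv pf (x - ηmax * t) * -ηmax)
    (fun t => (hpfd _).comp t (hdown t)) (by fun_prop)
  set φ := fun t => pf (a (r + ηmax * t))
  have hφmono : Monotone φ := fun s t hst =>
    hpf_mono.monotoneOn (ha_pos _).le (ha_pos _).le (ha_mono.monotone (by nlinarith))
  have hφint : IntegrableOn (fun t => exp (-ρb * t) * φ t) (Ioi τ) :=
    (integrableOn_exp_neg_mul_mul_comp_const_add (h := fun s => pf (a s)) hη hr hint).mono_set
      (Ioi_subset_Ioi hτpos.le)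
  have hafter := integral_Ioi_exp_neg_mul_mul_deriv (τ := τ) (φ := φ)
    (φ' := fun t => deriv pf (a (r + ηmax * t)) * deriv a (r + ηmax * t) * ηmax)
    (fun t => ((hpfd _).comp t ((had _).comp t (hup t))).congr_deriv (mul_assoc _ _ _).symm)
    (fun t _ => mul_nonneg (mul_nonneg (deriv_nonneg_of_monotoneOn_Ici hpf_mono.monotoneOn
      (ha_pos _)) ha_mono.monotone.deriv_nonneg) hη.le)
    hφint (tendsto_exp_neg_mul_mul_of_monotone hρ hφmono hφint)
  simp only [φ, ← mul_assoc, integral_mul_const, intervalIntegral.integral_mul_const,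
    ← intervalIntegral.integral_of_le hτpos.le, ← hmeet, mul_zero, exp_zero, one_mul, sub_zero]
    at hbefore hafter ⊢
  linear_combination hafter + hbefore

/-- μ = 0 case: w₁ satisfies η_max(∂_r w₁ − ∂_x w₁) = ρ̄ w₁ − π(x) for x > a(r),
where the partial derivatives are given by their known integral formulas. -/
theorem stmt11 (ρb ηmax : ℝ) (hρ : 0 < ρb) (hη : 0 < ηmax)
    (pf a : ℝ → ℝ)
    (hpf : ContDiff ℝ 1 pf) (hpf_mono : StrictMonoOn pf (Set.Ici 0))
    (hpf'_mono : MonotoneOn (deriv pf) (Set.Ici 0))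
    (ha : ContDiff ℝ 1 a) (ha_mono : StrictMono a) (ha_pos : ∀ s, 0 < a s)
    (hint : MeasureTheory.IntegrableOn
      (fun t : ℝ => Real.exp (-ρb * t) * pf (a (ηmax * t))) (Set.Ioi 0))
    (τM : ℝ → ℝ → ℝ)
    (hτ : ∀ r ≥ (0:ℝ), ∀ x, a r < x →
      x - ηmax * τM r x = a (r + ηmax * τM r x) ∧ 0 < τM r x)
    (w1 : ℝ → ℝ → ℝ)
    (hw1 : ∀ r x : ℝ, w1 r x =
      (∫ t in Set.Ioc (0:ℝ) (τM r x), Real.exp (-ρb * t) * pf (x - ηmax * t)) +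
      ∫ t in Set.Ioi (τM r x), Real.exp (-ρb * t) * pf (a (r + ηmax * t))) :
    ∀ r ≥ (0:ℝ), ∀ x, a r < x →
      ηmax * ((∫ t in Set.Ioi (τM r x),
          Real.exp (-ρb * t) * deriv pf (a (r + ηmax * t)) * deriv a (r + ηmax * t)) -
        ∫ t in Set.Ioc (0:ℝ) (τM r x), Real.exp (-ρb * t) * deriv pf (x - ηmax * t)) =
      ρb * w1 r x - pf x :=
  stmt11_general ρb ηmax hρ hη pf a hpf hpf_mono ha ha_mono ha_pos hint τM hτ w1 hw1
end

section
/- In the μ = 0 deterministic setting, suppose b(r₀) = a(r₀) for some r₀ ≥ 0, where b is the free boundary defined by w₀(r, b(r)) = w₁(r, b(r)). Then τ_M(r₀, b(r₀)) = 0, hence w₁(r₀, a(r₀)) = ∫₀^∞ e^(-ρ̄t) π(a(r₀ + η_max t)) dt > π(a(r₀))/ρ̄ = w₀(r₀, a(r₀)), contradicting the boundary equality. Therefore b(r) > a(r) for all r ≥ 0. -/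
open Real Set MeasureTheory

/-
A strictly increasing cash flow is worth strictly more than its initial value held forever:
`∫₀^∞ e^{-ρt} g(t) dt > ∫₀^∞ e^{-ρt} g(0) dt = g(0)/ρ`. Applied to `g t = π(a(r + η t))`
this gives `w₁(r, a(r)) > w₀(r, a(r))`, because at `x = a(r)` the exhaustion time `τ_M`
vanishes. Hence `b(r) = a(r)` would contradict `w₀ = w₁` on the boundary.
-/

theorem MeasureTheory.IntegrableOn.comp_add_right_Ioi {f : ℝ → ℝ} {a c : ℝ}
    (hf : IntegrableOn f (Ioi (a + c))) : IntegrableOn (fun t => f (t + c)) (Ioi a) := by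
  have hpre : (fun t : ℝ => t + c) ⁻¹' Ioi (a + c) = Ioi a := by
    ext t; simp
  rw [← hpre]
  exact ((measurePreserving_add_right volume c).integrableOn_comp_preimage
    (MeasurableEquiv.addRight c).measurableEmbedding).mpr hf

theorem MeasureTheory.setIntegral_lt_setIntegral_of_forall_lt {X : Type*} [MeasurableSpace X]
    {μ : Measure X} {s : Set X} {f g : X → ℝ} (hs : MeasurableSet s) (hμs : μ s ≠ 0)
    (hf : IntegrableOn f s μ) (hg : IntegrableOn g s μ) (hlt : ∀ x ∈ s, f x < g x) :
    ∫ x in s, f x ∂μ < ∫ x in s, g x ∂μ := by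
  have hsupp : Function.support (g - f) ∩ s = s :=
    inter_eq_self_of_subset_right fun x hx => sub_ne_zero.mpr (hlt x hx).ne'
  have hpos : 0 < ∫ x in s, (g - f) x ∂μ := by
    rw [setIntegral_pos_iff_support_of_nonneg_ae _ (hg.sub hf), hsupp]
    · exact pos_iff_ne_zero.mpr hμs
    · filter_upwards [ae_restrict_mem hs] with x hx
      exact sub_nonneg.mpr (hlt x hx).le
  rw [Pi.sub_def, integral_sub hg hf] at hpos
  linarith

theorem integral_exp_neg_mul_Ioi_zero {ρ : ℝ} (hρ : 0 < ρ) :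
    ∫ t in Ioi (0 : ℝ), exp (-ρ * t) = 1 / ρ := by
  rw [integral_exp_mul_Ioi (neg_lt_zero.mpr hρ), mul_zero, exp_zero]
  field_simp

theorem div_lt_integral_exp_neg_mul_of_lt {ρ : ℝ} (hρ : 0 < ρ) {g : ℝ → ℝ}
    (hg : IntegrableOn (fun t => exp (-ρ * t) * g t) (Ioi 0)) (hlt : ∀ t > 0, g 0 < g t) :
    g 0 / ρ < ∫ t in Ioi (0 : ℝ), exp (-ρ * t) * g t := by
  have hconst : ∫ t in Ioi (0 : ℝ), exp (-ρ * t) * g 0 = g 0 / ρ := by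
    rw [integral_mul_const, integral_exp_neg_mul_Ioi_zero hρ]
    ring
  rw [← hconst]
  refine setIntegral_lt_setIntegral_of_forall_lt measurableSet_Ioi (by simp)
    ((exp_neg_integrableOn_Ioi 0 hρ).mul_const _) hg fun t ht => ?_
  exact mul_lt_mul_of_pos_left (hlt t ht) (exp_pos _)

-- The shifted stream is the tail from `r / η` of the original one, rescaled by `e^{ρ r / η}`.
theorem integrableOn_exp_neg_mul_comp_add_mul {ρ η r : ℝ} (hη : 0 < η) (hr : 0 ≤ r)
    {g : ℝ → ℝ} (hg : IntegrableOn (fun t => exp (-ρ * t) * g (η * t)) (Ioi 0)) :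
    IntegrableOn (fun t => exp (-ρ * t) * g (r + η * t)) (Ioi 0) := by
  set c := r / η
  have htail : IntegrableOn (fun t => exp (-ρ * t) * g (η * t)) (Ioi (0 + c)) :=
    hg.mono_set (Ioi_subset_Ioi (by positivity))
  refine IntegrableOn.congr_fun (htail.comp_add_right_Ioi.const_mul (exp (ρ * c)))
    (fun t _ => ?_) measurableSet_Ioi
  have hηc : η * (t + c) = r + η * t := by
    simp only [c]; field_simp; ring
  rw [hηc, ← mul_assoc, ← exp_add]
  ring_nf

theorem stmt12_general (ρb ηmax : ℝ) (hρ : 0 < ρb) (hη : 0 < ηmax)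
    (pf a : ℝ → ℝ)
    (hpf_mono : StrictMonoOn pf (Set.Ici 0))
    (ha_mono : StrictMono a) (ha_pos : ∀ s, 0 < a s)
    (hint : MeasureTheory.IntegrableOn
      (fun t : ℝ => Real.exp (-ρb * t) * pf (a (ηmax * t))) (Set.Ioi 0))
    (τM : ℝ → ℝ → ℝ)
    (hτ_zero : ∀ r ≥ (0:ℝ), ∀ x, x ≤ a r → τM r x = 0)
    (w0 w1 : ℝ → ℝ → ℝ)
    (hw0 : ∀ r x : ℝ, w0 r x = pf x / ρb)
    (hw1 : ∀ r x : ℝ, w1 r x =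
      (∫ t in Set.Ioc (0:ℝ) (τM r x), Real.exp (-ρb * t) * pf (x - ηmax * t)) +
      ∫ t in Set.Ioi (τM r x), Real.exp (-ρb * t) * pf (a (r + ηmax * t)))
    (b : ℝ → ℝ)
    (hb : ∀ r ≥ (0:ℝ), w0 r (b r) = w1 r (b r))
    (hb_ge : ∀ r ≥ (0:ℝ), a r ≤ b r) :
    (∀ r ≥ (0:ℝ), pf (a r) / ρb <
      ∫ t in Set.Ioi (0:ℝ), Real.exp (-ρb * t) * pf (a (r + ηmax * t))) ∧
    (∀ r ≥ (0:ℝ), a r < b r) := by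
  have key : ∀ r ≥ (0:ℝ), pf (a r) / ρb <
      ∫ t in Set.Ioi (0:ℝ), Real.exp (-ρb * t) * pf (a (r + ηmax * t)) := by
    intro r hr
    simpa using div_lt_integral_exp_neg_mul_of_lt (g := fun t => pf (a (r + ηmax * t))) hρ
      (integrableOn_exp_neg_mul_comp_add_mul (g := pf ∘ a) hη hr hint) fun t ht =>
        hpf_mono (ha_pos _).le (ha_pos _).le (ha_mono (by nlinarith))
  refine ⟨key, fun r hr => (hb_ge r hr).lt_of_ne fun hab => (key r hr).ne ?_⟩
  have hτ : τM r (a r) = 0 := hτ_zero r hr (a r) le_rfl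
  simpa [hw0, hw1, hτ, ← hab] using hb r hr

/-- μ = 0 case: the free boundary b (where w₀ = w₁) lies strictly above a:
if b(r₀) = a(r₀) then τ_M = 0 and w₁(r₀,a(r₀)) > w₀(r₀,a(r₀)), a contradiction;
hence b(r) > a(r) for all r ≥ 0. -/
theorem stmt12 (ρb ηmax : ℝ) (hρ : 0 < ρb) (hη : 0 < ηmax)
    (pf a : ℝ → ℝ)
    (hpf : ContDiff ℝ 1 pf) (hpf_mono : StrictMonoOn pf (Set.Ici 0))
    (ha : ContDiff ℝ 1 a) (ha_mono : StrictMono a) (ha_pos : ∀ s, 0 < a s)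
    (hint : MeasureTheory.IntegrableOn
      (fun t : ℝ => Real.exp (-ρb * t) * pf (a (ηmax * t))) (Set.Ioi 0))
    (τM : ℝ → ℝ → ℝ)
    (hτ_eq : ∀ r ≥ (0:ℝ), ∀ x, a r < x → x - ηmax * τM r x = a (r + ηmax * τM r x))
    (hτ_zero : ∀ r ≥ (0:ℝ), ∀ x, x ≤ a r → τM r x = 0)
    (w0 w1 : ℝ → ℝ → ℝ)
    (hw0 : ∀ r x : ℝ, w0 r x = pf x / ρb)
    (hw1 : ∀ r x : ℝ, w1 r x =
      (∫ t in Set.Ioc (0:ℝ) (τM r x), Real.exp (-ρb * t) * pf (x - ηmax * t)) +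
      ∫ t in Set.Ioi (τM r x), Real.exp (-ρb * t) * pf (a (r + ηmax * t)))
    (b : ℝ → ℝ)
    (hb : ∀ r ≥ (0:ℝ), w0 r (b r) = w1 r (b r))
    (hb_ge : ∀ r ≥ (0:ℝ), a r ≤ b r)
    (hB : ∀ r ≥ (0:ℝ), ∀ x, x < b r → w0 r x < w1 r x) :
    (∀ r ≥ (0:ℝ), pf (a r) / ρb <
      ∫ t in Set.Ioi (0:ℝ), Real.exp (-ρb * t) * pf (a (r + ηmax * t))) ∧
    (∀ r ≥ (0:ℝ), a r < b r) :=
  stmt12_general ρb ηmax hρ hη pf a hpf_mono ha_mono ha_pos hint τM hτ_zero w0 w1 hw0 hw1 b hb hb_ge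
end

section
/- Let μ < 0, x > a(r), and h(r,x) = −η_max(∂_r w₁ − ∂_x w₁)(r,x) where (∂_r w₁ − ∂_x w₁)(r,x) = ∫_{τ_M}^∞ e^(-ρ̄t) π̇(a(r + η_max t)) ȧ(r + η_max t) dt − ∫₀^{τ_M} e^(-ρ̄t) π̇(Y_t[x − f_M(t)]) Y_t dt. Then lim_{x→∞} h(r,x) = η_max ∫₀^∞ e^(-ρ̄t) lim_{x→∞} π̇(Y_t[x − f_M(t)]) Y_t dt > 0. -/
/-!
For `t ≤ τ_M(r,x)` the defining equation of `τ_M` and the monotonicity of `f_M` give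
`x - f_M(t) ≥ 0`, so the argument `Y_t (x - f_M(t))` of `π̇` stays in the region where `π̇` is
monotone with limit `L`. There `|π̇| ≤ max |π̇(0)| L`, hence the second integrand is dominated by a
multiple of `e^{(μ - ρ̄) t}`, and since `Y_t (x - f_M(t)) → ∞` and `τ_M → ∞` dominated convergence
sends the second integral to `∫₀^∞ e^{-ρ̄ t} L e^{μ t} dt = L / (ρ̄ - μ) > 0`. The first integral is
a tail `∫_{τ_M}^∞` with `τ_M → ∞`, so it tends to `0`.
-/

open Real Set MeasureTheory Filter

theorem MonotoneOn.le_of_tendsto_atTop {g : ℝ → ℝ} {a L y : ℝ} (hg : MonotoneOn g (Ici a))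
    (hL : Tendsto g atTop (nhds L)) (hy : a ≤ y) : g y ≤ L :=
  ge_of_tendsto hL ((eventually_ge_atTop y).mono fun _ hz => hg hy (hy.trans hz) hz)

theorem MonotoneOn.abs_le_of_tendsto_atTop {g : ℝ → ℝ} {a L y : ℝ} (hg : MonotoneOn g (Ici a))
    (hL : Tendsto g atTop (nhds L)) (hy : a ≤ y) : |g y| ≤ max |g a| |L| :=
  abs_le_max_abs_abs (hg self_mem_Ici hy hy) (hg.le_of_tendsto_atTop hL hy)

theorem exp_neg_mul_mul_exp {ρ μ : ℝ} (C t : ℝ) :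
    exp (-ρ * t) * C * exp (μ * t) = C * exp (-(ρ - μ) * t) := by
  rw [mul_right_comm, ← exp_add]
  ring_nf

theorem integrableOn_exp_neg_mul_mul_exp_Ioi {ρ μ : ℝ} (h : μ < ρ) (C : ℝ) :
    IntegrableOn (fun t => exp (-ρ * t) * C * exp (μ * t)) (Ioi 0) := by
  simp only [exp_neg_mul_mul_exp]
  exact (exp_neg_integrableOn_Ioi 0 (sub_pos.2 h)).const_mul C

theorem integral_exp_neg_mul_mul_exp_Ioi {ρ μ : ℝ} (h : μ < ρ) (C : ℝ) :
    ∫ t in Ioi 0, exp (-ρ * t) * C * exp (μ * t) = C / (ρ - μ) := by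
  simp only [exp_neg_mul_mul_exp]
  rw [integral_const_mul, integral_exp_mul_Ioi (by linarith) 0]
  field_simp
  simp

theorem tendsto_setIntegral_Ioc_of_dominated {ι E : Type*} [NormedAddCommGroup E]
    [NormedSpace ℝ E] {l : Filter ι} [l.IsCountablyGenerated] {F : ι → ℝ → E} {f : ℝ → E}
    {bound : ℝ → ℝ} {τ : ι → ℝ} {c : ℝ} (hτ : Tendsto τ l atTop)
    (hF_meas : ∀ᶠ i in l, AEStronglyMeasurable (F i) (volume.restrict (Ioi c)))
    (h_bound : ∀ᶠ i in l, ∀ t ∈ Ioc c (τ i), ‖F i t‖ ≤ bound t)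
    (bound_integrable : IntegrableOn bound (Ioi c))
    (h_lim : ∀ t ∈ Ioi c, Tendsto (fun i => F i t) l (nhds (f t))) :
    Tendsto (fun i => ∫ t in Ioc c (τ i), F i t) l (nhds (∫ t in Ioi c, f t)) := by
  have hindicator : ∀ i,
      ∫ t in Ioi c, (Ioc c (τ i)).indicator (F i) t = ∫ t in Ioc c (τ i), F i t := fun i => by
    rw [setIntegral_indicator measurableSet_Ioc, inter_eq_self_of_subset_right Ioc_subset_Ioi_self]
  refine (tendsto_integral_filter_of_dominated_convergence (fun t => ‖bound t‖)
    (hF_meas.mono fun i h => h.indicator measurableSet_Ioc) (h_bound.mono fun i hi => ?_)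
    bound_integrable.norm ((ae_restrict_iff' measurableSet_Ioi).2 (ae_of_all _ fun t ht => ?_))
    ).congr hindicator
  · refine ae_of_all _ fun t => ?_
    by_cases ht : t ∈ Ioc c (τ i)
    · rw [indicator_of_mem ht]
      exact (hi t ht).trans (le_abs_self _)
    · rw [indicator_of_notMem ht, norm_zero]
      exact norm_nonneg _
  · refine (h_lim t ht).congr' ?_
    filter_upwards [hτ.eventually_ge_atTop t] with i hi
    rw [indicator_of_mem (show t ∈ Ioc c (τ i) from ⟨ht, hi⟩)]

theorem MonotoneOn.tendsto_setIntegral_Ioc_exp_mul_comp {g f τ : ℝ → ℝ} {ρ μ L : ℝ}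
    (hg : MonotoneOn g (Ici 0)) (hgL : Tendsto g atTop (nhds L)) (hg_meas : Measurable g)
    (hf_meas : Measurable f) (hμρ : μ < ρ) (hτ : Tendsto τ atTop atTop)
    (hfτ : ∀ᶠ x in atTop, ∀ t ≤ τ x, f t ≤ x) :
    Tendsto (fun x => ∫ t in Ioc 0 (τ x), exp (-ρ * t) * g (exp (μ * t) * (x - f t)) * exp (μ * t))
      atTop (nhds (∫ t in Ioi 0, exp (-ρ * t) * L * exp (μ * t))) := by
  refine tendsto_setIntegral_Ioc_of_dominated hτ (Eventually.of_forall fun x => ?_)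
    (bound := fun t => exp (-ρ * t) * max |g 0| |L| * exp (μ * t)) ?_
    (integrableOn_exp_neg_mul_mul_exp_Ioi hμρ _) fun t _ => ?_
  · fun_prop
  · filter_upwards [hfτ] with x hx t ht
    have hz : 0 ≤ exp (μ * t) * (x - f t) :=
      mul_nonneg (exp_pos _).le (sub_nonneg.2 (hx t ht.2))
    simp only [norm_mul, norm_eq_abs, abs_exp]
    gcongr
    exact hg.abs_le_of_tendsto_atTop hgL hz
  · have hz : Tendsto (fun x => exp (μ * t) * (x - f t)) atTop atTop :=
      (tendsto_atTop_add_const_right _ (-f t) tendsto_id).const_mul_atTop (exp_pos _)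
    exact ((hgL.comp hz).const_mul _).mul_const _

theorem stmt14_general (μ ρb ηmax : ℝ) (hμ : μ < 0) (hρ : 0 < ρb) (hη : 0 < ηmax)
    (pf a : ℝ → ℝ)
    (hpf'_mono : MonotoneOn (deriv pf) (Set.Ici 0))
    (Lpf : ℝ) (hLpf : 0 < Lpf)
    (hpf'_lim : Filter.Tendsto (deriv pf) Filter.atTop (nhds Lpf))
    (ha_pos : ∀ s, 0 < a s)
    (fM : ℝ → ℝ)
    (hf : ∀ t : ℝ, fM t = (ηmax / |μ|) * (Real.exp (|μ| * t) - 1))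
    (τM : ℝ → ℝ → ℝ)
    (hτ_eq : ∀ r > (0:ℝ), ∀ x, a r < x →
      x - fM (τM r x) = Real.exp (|μ| * τM r x) * a (r + ηmax * τM r x))
    (hτ_lim : ∀ r > (0:ℝ), Filter.Tendsto (fun x => τM r x) Filter.atTop Filter.atTop)
    (h : ℝ → ℝ → ℝ)
    (hh : ∀ r > (0:ℝ), ∀ x, a r < x → h r x =
      -ηmax * ((∫ t in Set.Ioi (τM r x),
          Real.exp (-ρb * t) * deriv pf (a (r + ηmax * t)) * deriv a (r + ηmax * t)) -
        ∫ t in Set.Ioc (0:ℝ) (τM r x),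
          Real.exp (-ρb * t) * deriv pf (Real.exp (μ * t) * (x - fM t)) * Real.exp (μ * t))) :
    ∀ r > (0:ℝ),
      Filter.Tendsto (fun x => h r x) Filter.atTop
        (nhds (ηmax * ∫ t in Set.Ioi (0:ℝ), Real.exp (-ρb * t) * Lpf * Real.exp (μ * t))) ∧
      0 < ηmax * ∫ t in Set.Ioi (0:ℝ), Real.exp (-ρb * t) * Lpf * Real.exp (μ * t) := by
  intro r hr
  have hμρ : μ < ρb := hμ.trans hρ
  have hfM_mono : Monotone fM := fun s t hst => by
    simp only [hf]
    gcongr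
  have hfM_le : ∀ᶠ x in atTop, ∀ t ≤ τM r x, fM t ≤ x := by
    filter_upwards [eventually_gt_atTop (a r)] with x hx t ht
    calc fM t ≤ fM (τM r x) := hfM_mono ht
      _ = x - exp (|μ| * τM r x) * a (r + ηmax * τM r x) := by rw [← hτ_eq r hr x hx]; ring
      _ ≤ x := sub_le_self _ (mul_pos (exp_pos _) (ha_pos _)).le
  -- `tendsto_integral_Ioi_zero` needs no integrability: a non-integrable tail has integral `0`.
  have hI1 : Tendsto (fun x => ∫ t in Ioi (τM r x),
      exp (-ρb * t) * deriv pf (a (r + ηmax * t)) * deriv a (r + ηmax * t)) atTop (nhds 0) :=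
    tendsto_integral_Ioi_zero (hτ_lim r hr)
  have hI2 := hpf'_mono.tendsto_setIntegral_Ioc_exp_mul_comp hpf'_lim (measurable_deriv pf)
    (by rw [funext hf]; fun_prop) hμρ (hτ_lim r hr) hfM_le
  have hI := (hI1.sub hI2).const_mul (-ηmax)
  rw [zero_sub, mul_neg, neg_mul, neg_neg] at hI
  refine ⟨hI.congr' ?_, ?_⟩
  · filter_upwards [eventually_gt_atTop (a r)] with x hx
    exact (hh r hr x hx).symm
  · rw [integral_exp_neg_mul_mul_exp_Ioi hμρ]
    exact mul_pos hη (div_pos hLpf (sub_pos.2 hμρ))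

/-- μ < 0 case: as x → ∞, h(r,x) → η_max ∫₀^∞ e^(-ρ̄t) (lim_{y→∞} π̇(y)) e^(μt) dt > 0,
by monotone convergence applied to h = −η_max(∂_r w₁ − ∂_x w₁). -/
theorem stmt14 (μ ρb ηmax : ℝ) (hμ : μ < 0) (hρ : 0 < ρb) (hη : 0 < ηmax)
    (pf a : ℝ → ℝ)
    (hpf : ContDiff ℝ 1 pf) (hpf_mono : StrictMonoOn pf (Set.Ici 0))
    (hpf'_mono : MonotoneOn (deriv pf) (Set.Ici 0))
    (Lpf : ℝ) (hLpf : 0 < Lpf)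
    (hpf'_lim : Filter.Tendsto (deriv pf) Filter.atTop (nhds Lpf))
    (ha : ContDiff ℝ 1 a) (ha_mono : StrictMono a) (ha_pos : ∀ s, 0 < a s)
    (hint : MeasureTheory.IntegrableOn
      (fun t : ℝ => Real.exp (-ρb * t) * pf (a (ηmax * t))) (Set.Ioi 0))
    (fM : ℝ → ℝ)
    (hf : ∀ t : ℝ, fM t = (ηmax / |μ|) * (Real.exp (|μ| * t) - 1))
    (τM : ℝ → ℝ → ℝ)
    (hτ_eq : ∀ r > (0:ℝ), ∀ x, a r < x →
      x - fM (τM r x) = Real.exp (|μ| * τM r x) * a (r + ηmax * τM r x))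
    (hτ_lim : ∀ r > (0:ℝ), Filter.Tendsto (fun x => τM r x) Filter.atTop Filter.atTop)
    (h : ℝ → ℝ → ℝ)
    (hh : ∀ r > (0:ℝ), ∀ x, a r < x → h r x =
      -ηmax * ((∫ t in Set.Ioi (τM r x),
          Real.exp (-ρb * t) * deriv pf (a (r + ηmax * t)) * deriv a (r + ηmax * t)) -
        ∫ t in Set.Ioc (0:ℝ) (τM r x),
          Real.exp (-ρb * t) * deriv pf (Real.exp (μ * t) * (x - fM t)) * Real.exp (μ * t))) :
    ∀ r > (0:ℝ),
      Filter.Tendsto (fun x => h r x) Filter.atTop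
        (nhds (ηmax * ∫ t in Set.Ioi (0:ℝ), Real.exp (-ρb * t) * Lpf * Real.exp (μ * t))) ∧
      0 < ηmax * ∫ t in Set.Ioi (0:ℝ), Real.exp (-ρb * t) * Lpf * Real.exp (μ * t) :=
  stmt14_general μ ρb ηmax hμ hρ hη pf a hpf'_mono Lpf hLpf hpf'_lim ha_pos fM hf τM hτ_eq hτ_lim h
    hh
end
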